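/- In the operad NAP ∘ q, parallel associativity holds in the case where s and s' lie in the same block C_s of π: the proof reduces, via the NAP commutation property (t∘_s u)∘_{root(u)} v = φ((t∘_s v)∘_{root(v)} u) and parallel associativity of q, to the identity ((γ_{C_s} ∘_s β) ∘_{s'} α) = ((γ_{C_s} ∘_{s'} α) ∘_s β). Formally: if s, s' are distinct elements of the same block C_s, then (X □_s Y) □_{s'} Z = (X □_{s'} Z) □_s Y for X ∈ NAP∘q[S], Y ∈ NAP∘q[T], Z ∈ NAP∘q[R]. -/

import Mathlib

/-- A labelled rooted tree with vertex set `supp` inside an ambient label type `V`,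
given by its root and its parent function (normalized to the identity outside
`supp`, and fixing the root). -/
structure LTree (V : Type) where
  supp : Finset V
  root : V
  parent : V → V

namespace LTree

variable {V : Type} [DecidableEq V]

/-- `t` is an honest rooted tree on its vertex set `t.supp`:  the root is a vertex,
the parent map fixes the root, sends vertices to vertices, every vertex reaches the
root by iterating the parent map (connectedness/acyclicity), and the parent map is
normalized to the identity outside the vertex set. -/
def IsTree (t : LTree V) : Prop :=
  t.root ∈ t.supp ∧ t.parent t.root = t.root ∧
    (∀ v ∈ t.supp, t.parent v ∈ t.supp ∧ ∃ n, t.parent^[n] v = t.root) ∧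
    (∀ v, v ∉ t.supp → t.parent v = v)

/-- The NAP partial composition `u ∘ₛ v`: replace the vertex `s` of `u` by the tree
`v`, reconnecting each edge of `u` arriving at `s` to the root of `v`. -/
def ncomp (u : LTree V) (s : V) (v : LTree V) : LTree V where
  supp := u.supp.erase s ∪ v.supp
  root := if u.root = s then v.root else u.root
  parent x :=
    if x ∈ u.supp.erase s then (if u.parent x = s then v.root else u.parent x)
    else if x ∈ v.supp then
      (if x = v.root then (if u.parent s = s then v.root else u.parent s) else v.parent x)
    else x

/-- Relabelling a tree along a bijection of the ambient label type. -/
def relabel (e : V ≃ V) (t : LTree V) : LTree V where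
  supp := t.supp.image e
  root := e t.root
  parent x := e (t.parent (e.symm x))

/-- The single-vertex tree on the vertex `a`. -/
def eta (a : V) : LTree V := ⟨{a}, a, fun x => x⟩

/-- The edges of `u` arriving at `s`, identified with the children of `s`. -/
def children (u : LTree V) (s : V) : Finset V :=
  (u.supp.erase s).filter (fun w => u.parent w = s)

/-- The tree `u ∘ₛᶠ v` for `f : In(s,u) → Ver(v)`: replace the vertex `s` of `u` by
the tree `v`, reconnecting each edge `a ∈ In(s,u)` to the vertex `f a` of `v`. -/
def fcomp (u : LTree V) (s : V) (v : LTree V) (f : V → V) : LTree V where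
  supp := u.supp.erase s ∪ v.supp
  root := if u.root = s then v.root else u.root
  parent x :=
    if x ∈ u.supp.erase s then (if u.parent x = s then f x else u.parent x)
    else if x ∈ v.supp then
      (if x = v.root then (if u.parent s = s then v.root else u.parent s) else v.parent x)
    else x

/-- The Pre-Lie partial composition `u ∘ₛ v := Σ_{f : In(s,u) → Ver(v)} u ∘ₛᶠ v`,
a formal linear combination of rooted trees. -/
noncomputable def plcomp (u : LTree V) (s : V) (v : LTree V) : LTree V →₀ ℚ :=
  ∑ f : {w // w ∈ children u s} → {x // x ∈ v.supp},
    Finsupp.single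
      (fcomp u s v (fun w => if h : w ∈ children u s then (f ⟨w, h⟩ : V) else v.root)) 1

/-- Bilinear extension of the Pre-Lie partial composition to formal sums. -/
noncomputable def plext (x : LTree V →₀ ℚ) (s : V) (y : LTree V →₀ ℚ) : LTree V →₀ ℚ :=
  x.sum fun t a => y.sum fun u b => (a * b) • plcomp t s u

end LTree

/-- A positive symmetric operad `q`, presented in "supported elements" form over an
ambient label type `V`: a carrier type `Q` of operations, each with a nonempty
finite support (its finite input set) in `V`, together with partial compositions
`∘ₛ`, units, and relabelling along bijections of `V`, satisfying the symmetric
operad axioms (parallel and nested associativity, naturality, unitality). -/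
structure POperad (V : Type) (Q : Type) [DecidableEq V] where
  supp : Q → Finset V
  comp : Q → V → Q → Q
  unit : V → Q
  relabel : (V ≃ V) → Q → Q
  supp_nonempty : ∀ x, (supp x).Nonempty
  supp_comp : ∀ x s y, s ∈ supp x → supp (comp x s y) = (supp x).erase s ∪ supp y
  supp_unit : ∀ a, supp (unit a) = {a}
  supp_relabel : ∀ e x, supp (relabel e x) = (supp x).image e
  parallel : ∀ x y z s s', s ∈ supp x → s' ∈ supp x → s ≠ s' →
    Disjoint (supp x) (supp y) → Disjoint (supp x) (supp z) →
    Disjoint (supp y) (supp z) →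
    comp (comp x s y) s' z = comp (comp x s' z) s y
  nested : ∀ x y z s t, s ∈ supp x → t ∈ supp y →
    Disjoint (supp x) (supp y) → Disjoint (supp x) (supp z) →
    Disjoint (supp y) (supp z) →
    comp (comp x s y) t z = comp x s (comp y t z)
  natural : ∀ e x s y, s ∈ supp x →
    relabel e (comp x s y) = comp (relabel e x) (e s) (relabel e y)
  natural_unit : ∀ e a, relabel e (unit a) = unit (e a)
  unit_left : ∀ a y, comp (unit a) a y = y
  unit_right : ∀ x s, s ∈ supp x → comp x s (unit s) = x

namespace LTree

variable {V Q : Type} [DecidableEq V] [DecidableEq Q]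

/-- Rename the single vertex `o` of a tree to `n`. -/
def rename (t : LTree Q) (o n : Q) : LTree Q where
  supp := insert n (t.supp.erase o)
  root := if t.root = o then n else t.root
  parent x :=
    if x = n then (if t.parent o = o then n else t.parent o)
    else if x ∈ t.supp.erase o then (if t.parent x = o then n else t.parent x)
    else x

/-- Relabel the vertices of a tree along a map `f` (injective on the vertex set). -/
noncomputable def mapV (f : Q → Q) (t : LTree Q) : LTree Q where
  supp := t.supp.image f
  root := f t.root
  parent x := if h : ∃ v, v ∈ t.supp ∧ f v = x then f (t.parent h.choose) else x

end LTree

namespace NAPofQ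

variable {V Q : Type} [DecidableEq V] [DecidableEq Q]

/-- An element of the composite species `NAP ∘ q` on the set `I`: a rooted tree
whose vertices are `q`-operations (the blocks `C` of a partition `π ⊢ I` decorated
by `γ_C ∈ q[C]`).  Validity: the underlying tree is an honest rooted tree and the
supports of the decorations of distinct vertices are disjoint (so that they form a
partition of the total support). -/
def Valid (q : POperad V Q) (X : LTree Q) : Prop :=
  X.IsTree ∧ ∀ c ∈ X.supp, ∀ c' ∈ X.supp, c ≠ c' → Disjoint (q.supp c) (q.supp c')

/-- The total support (underlying set `I`) of an element of `NAP ∘ q`. -/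
def tsupp (q : POperad V Q) (X : LTree Q) : Finset V :=
  X.supp.biUnion q.supp

/-- The block `C_s` of `X` containing `s`: the unique vertex of `X` whose
decoration has `s` in its support. -/
noncomputable def blockOf (q : POperad V Q) (X : LTree Q) (s : V) : Q :=
  if h : ∃ c, c ∈ X.supp ∧ s ∈ q.supp c then h.choose else X.root

/-- The partial composition `□ₛ` on `NAP ∘ q`:
`(t ⊗ ⊗_C γ_C) □ₛ (u ⊗ ⊗_B β_B) = (t ∘_{C_s} u) ⊗ ⊗_D α_D`, where the tree of the
first factor is NAP-composed at the block `C_s` containing `s` with the tree of the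
second factor, the decoration of the merged block `C_s ⊔ₛ B_root(u)` is
`γ_{C_s} ∘ₛ β_{B_root(u)}`, and all other decorations are kept. -/
noncomputable def box (q : POperad V Q) (X : LTree Q) (s : V) (Y : LTree Q) : LTree Q :=
  LTree.ncomp X (blockOf q X s)
    (LTree.rename Y Y.root (q.comp (blockOf q X s) s Y.root))

/-- The unit of `NAP ∘ q` on a singleton `{a}`: the one-vertex tree decorated by
the unit of `q`. -/
def unitT (q : POperad V Q) (a : V) : LTree Q := ⟨{q.unit a}, q.unit a, fun x => x⟩

end NAPofQ

/-! Since `s` and `s'` lie in the same block `c`, both sides graft `Y` and `Z` at the vertex `c`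
of `X`. With `β`, `α` the root decorations of `Y`, `Z`, the decoration of the merged vertex is
`(c ∘ₛ β) ∘ₛ' α` on one side and `(c ∘ₛ' α) ∘ₛ β` on the other, which agree by parallel
associativity of `q`. The underlying trees agree as well: either way, `c` is replaced by a single vertex to which the non-root
vertices of `Y` and `Z` attach exactly as they attached to their own roots. -/

namespace LTree

variable {V : Type}

theorem ext {t t' : LTree V} (hs : t.supp = t'.supp) (hr : t.root = t'.root)
    (hp : t.parent = t'.parent) : t = t' := by
  cases t; cases t'; simp_all

theorem IsTree.root_mem {t : LTree V} (ht : t.IsTree) : t.root ∈ t.supp := ht.1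

theorem IsTree.parent_mem {t : LTree V} (ht : t.IsTree) {x : V} (hx : x ∈ t.supp) :
    t.parent x ∈ t.supp :=
  (ht.2.2.1 x hx).1

variable [DecidableEq V]

theorem ncomp_rename_comm {u v w : LTree V} {c c₁ d₁ m : V}
    (hu : u.IsTree) (hv : v.IsTree) (hw : w.IsTree) (hc : c ∈ u.supp)
    (huv : Disjoint u.supp v.supp) (huw : Disjoint u.supp w.supp)
    (hvw : Disjoint v.supp w.supp)
    (hc₁ : c₁ ∉ u.supp ∪ v.supp ∪ w.supp) (hd₁ : d₁ ∉ u.supp ∪ v.supp ∪ w.supp)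
    (hm : m ∉ u.supp ∪ v.supp ∪ w.supp) :
    ncomp (ncomp u c (rename v v.root c₁)) c₁ (rename w w.root m)
      = ncomp (ncomp u c (rename w w.root d₁)) d₁ (rename v v.root m) := by
  have := hu.root_mem; have := hv.root_mem; have := hw.root_mem
  simp only [Finset.mem_union, not_or] at hc₁ hd₁ hm
  rw [Finset.disjoint_left] at huv huw hvw
  apply ext
  · ext x
    simp only [ncomp, rename, Finset.mem_union, Finset.mem_erase, Finset.mem_insert]
    grind
  · simp only [ncomp, rename]
    grind
  · funext x
    simp only [ncomp, rename, Finset.mem_union, Finset.mem_erase, Finset.mem_insert]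
    grind (splits := 30) [IsTree.parent_mem]

end LTree

namespace NAPofQ

variable {V Q : Type} [DecidableEq V] [DecidableEq Q] (q : POperad V Q)

omit [DecidableEq Q] in
theorem mem_tsupp_of_mem {W : LTree Q} {a : Q} {i : V} (ha : a ∈ W.supp)
    (hi : i ∈ q.supp a) : i ∈ tsupp q W :=
  Finset.mem_biUnion.mpr ⟨a, ha, hi⟩

omit [DecidableEq Q] in
theorem supp_subset_tsupp {W : LTree Q} {a : Q} (ha : a ∈ W.supp) : q.supp a ⊆ tsupp q W :=
  fun _ => mem_tsupp_of_mem q ha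

omit [DecidableEq Q] in
theorem disjoint_supp_of_disjoint_tsupp {W W' : LTree Q}
    (h : Disjoint (tsupp q W) (tsupp q W')) : Disjoint W.supp W'.supp := by
  refine Finset.disjoint_left.mpr fun a ha ha' => ?_
  obtain ⟨i, hi⟩ := q.supp_nonempty a
  exact Finset.disjoint_left.mp h (mem_tsupp_of_mem q ha hi) (mem_tsupp_of_mem q ha' hi)

omit [DecidableEq Q] in
theorem blockOf_eq_of_unique {X : LTree Q} {s : V} {c : Q} (hc : c ∈ X.supp)
    (hs : s ∈ q.supp c) (huniq : ∀ c' ∈ X.supp, s ∈ q.supp c' → c' = c) :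
    blockOf q X s = c := by
  have h : ∃ c, c ∈ X.supp ∧ s ∈ q.supp c := ⟨c, hc, hs⟩
  rw [blockOf, dif_pos h]
  exact huniq _ h.choose_spec.1 h.choose_spec.2

omit [DecidableEq Q] in
theorem Valid.blockOf_eq {q : POperad V Q} {X : LTree Q} {s : V} {c : Q} (hX : Valid q X)
    (hc : c ∈ X.supp) (hs : s ∈ q.supp c) : blockOf q X s = c :=
  blockOf_eq_of_unique q hc hs fun c' hc' hsc' => by_contra fun h =>
    Finset.disjoint_left.mp (hX.2 c' hc' c hc h) hsc' hs

theorem blockOf_box_of_mem {X Y : LTree Q} {s s' : V} {c : Q} (hX : Valid q X)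
    (hXY : Disjoint (tsupp q X) (tsupp q Y)) (hc : c ∈ X.supp) (hs : s ∈ q.supp c)
    (hs' : s' ∈ q.supp c) (hss' : s ≠ s') :
    blockOf q (box q X s Y) s' = q.comp c s Y.root := by
  have hs'c₁ : s' ∈ q.supp (q.comp c s Y.root) := by
    rw [q.supp_comp c s Y.root hs]
    exact Finset.mem_union_left _ (Finset.mem_erase.mpr ⟨hss'.symm, hs'⟩)
  refine blockOf_eq_of_unique q ?_ hs'c₁ fun c' hc' hs'c' => ?_
  · simp [box, hX.blockOf_eq hc hs, LTree.ncomp, LTree.rename]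
  · simp only [box, hX.blockOf_eq hc hs, LTree.ncomp, LTree.rename, Finset.mem_union,
      Finset.mem_erase, Finset.mem_insert] at hc'
    rcases hc' with ⟨hc'c, hc'X⟩ | rfl | ⟨-, hc'Y⟩
    · exact absurd hs' (Finset.disjoint_left.mp (hX.2 c' hc'X c hc hc'c) hs'c')
    · rfl
    · exact absurd (mem_tsupp_of_mem q hc'Y hs'c')
        (Finset.disjoint_left.mp hXY (mem_tsupp_of_mem q hc hs'))

theorem box_box_of_mem {X Y Z : LTree Q} {s s' : V} {c : Q} (hX : Valid q X)
    (hXY : Disjoint (tsupp q X) (tsupp q Y)) (hc : c ∈ X.supp) (hs : s ∈ q.supp c)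
    (hs' : s' ∈ q.supp c) (hss' : s ≠ s') :
    box q (box q X s Y) s' Z =
      LTree.ncomp (LTree.ncomp X c (LTree.rename Y Y.root (q.comp c s Y.root)))
        (q.comp c s Y.root) (LTree.rename Z Z.root (q.comp (q.comp c s Y.root) s' Z.root)) := by
  rw [box, blockOf_box_of_mem q hX hXY hc hs hs' hss', box, hX.blockOf_eq hc hs]

end NAPofQ

open NAPofQ in
/-- In the operad `NAP ∘ q`, parallel associativity holds in the case where `s` and
`s'` lie in the same block `C_s` of the partition underlying `X`: if `s ≠ s'` both
belong to the support of the decoration of one and the same vertex `c` of `X`, then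
`(X □ₛ Y) □ₛ' Z = (X □ₛ' Z) □ₛ Y`. -/
theorem NAPofQ_parallel_same_block {V Q : Type} [DecidableEq V] [DecidableEq Q]
    (q : POperad V Q) (X Y Z : LTree Q)
    (hX : Valid q X) (hY : Valid q Y) (hZ : Valid q Z)
    (hXY : Disjoint (tsupp q X) (tsupp q Y))
    (hXZ : Disjoint (tsupp q X) (tsupp q Z))
    (hYZ : Disjoint (tsupp q Y) (tsupp q Z))
    (s s' : V) (hss' : s ≠ s')
    (c : Q) (hc : c ∈ X.supp) (hs : s ∈ q.supp c) (hs' : s' ∈ q.supp c) :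
    box q (box q X s Y) s' Z = box q (box q X s' Z) s Y := by
  have hYr := hY.1.root_mem
  have hZr := hZ.1.root_mem
  rw [box_box_of_mem q hX hXY hc hs hs' hss', box_box_of_mem q hX hXZ hc hs' hs hss'.symm,
    ← q.parallel c Y.root Z.root s s' hs hs' hss'
      (hXY.mono (supp_subset_tsupp q hc) (supp_subset_tsupp q hYr))
      (hXZ.mono (supp_subset_tsupp q hc) (supp_subset_tsupp q hZr))
      (hYZ.mono (supp_subset_tsupp q hYr) (supp_subset_tsupp q hZr))]
  refine LTree.ncomp_rename_comm hX.1 hY.1 hZ.1 hc (disjoint_supp_of_disjoint_tsupp q hXY)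
    (disjoint_supp_of_disjoint_tsupp q hXZ) (disjoint_supp_of_disjoint_tsupp q hYZ) ?_ ?_ ?_
  -- The three new blocks are not vertices of `X`, `Y`, `Z`: taking `y ∈ β`, `z ∈ α`, the
  -- first contains `s'` and `y`, the second `s` and `z`, the merged one `y` and `z`, and each
  -- pair meets two of the pairwise disjoint total supports.
  all_goals
    obtain ⟨y, hy⟩ := q.supp_nonempty Y.root
    obtain ⟨z, hz⟩ := q.supp_nonempty Z.root
    have := q.supp_comp
    have := @mem_tsupp_of_mem _ _ _ q
    rw [Finset.disjoint_left] at hXY hXZ hYZ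
    grind
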